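/- arXiv:1912.04946 — 6 statements merged into one kernel-verified Lean document; each statement's English description precedes it below -/
import Mathlib

section
/- Let Θ be a finite-dimensional normed real vector space and let f : Θ → ℝ be lower semicontinuous, bounded below, and coercive (f(θ) → ∞ as ‖θ‖ → ∞). Then for every t ∈ ℝ, the sublevel set {q ∈ P(Θ) : ∫_Θ f dq ≤ t} of the functional Ψ(q) = ∫_Θ f dq is compact in the topology of weak convergence of probability measures; in particular, Ψ is a coercive functional on P(Θ). -/
/-!
The sublevel set is closed because `q ↦ ∫⁻ f dq` is lower semicontinuous for lower semicontinuous
`f`: by the layer-cake formula it integrates `t ↦ q {f > t}`, each of which is lower semicontinuous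
in `q` by the portmanteau theorem, and Fatou's lemma passes to the integral along sequences, which
suffice because `P(Θ)` is metrizable. It is tight by Markov's inequality, since coercivity puts
`{f < M}` inside a compact set. Prokhorov's theorem concludes.
-/

open MeasureTheory Filter Topology ENNReal

lemma LowerSemicontinuous.lintegral_le_liminf_lintegral_of_forall_isOpen
    {Ω : Type*} [MeasurableSpace Ω] [TopologicalSpace Ω] [OpensMeasurableSpace Ω]
    {μ : Measure Ω} {μs : ℕ → Measure Ω} {g : Ω → ℝ} (hg : LowerSemicontinuous g)
    (h_opens : ∀ G, IsOpen G → μ G ≤ atTop.liminf (fun i ↦ μs i G)) :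
    ∫⁻ x, ENNReal.ofReal (g x) ∂μ ≤ atTop.liminf (fun i ↦ ∫⁻ x, ENNReal.ofReal (g x) ∂(μs i)) := by
  have hg' : LowerSemicontinuous g⁺ := hg.sup lowerSemicontinuous_const
  have layer_cake (ν : Measure Ω) :
      ∫⁻ x, ENNReal.ofReal (g x) ∂ν = ∫⁻ t in Set.Ioi 0, ν {x | t < g⁺ x} := by
    rw [← lintegral_eq_lintegral_meas_lt _ (Eventually.of_forall (posPart_nonneg g))
      hg'.measurable.aemeasurable]
    simp [posPart]
  simp only [layer_cake]
  calc ∫⁻ t in Set.Ioi 0, μ {x | t < g⁺ x}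
      ≤ ∫⁻ t in Set.Ioi 0, atTop.liminf (fun i ↦ μs i {x | t < g⁺ x}) :=
        lintegral_mono fun t ↦ h_opens _ (hg'.isOpen_preimage t)
    _ ≤ atTop.liminf (fun i ↦ ∫⁻ t in Set.Ioi 0, μs i {x | t < g⁺ x}) :=
        lintegral_liminf_le fun i ↦ Antitone.measurable fun s t hst ↦
          measure_mono fun _ hx ↦ hst.trans_lt hx

lemma isClosed_setOf_lintegral_ofReal_le {Ω : Type*} [MeasurableSpace Ω] [TopologicalSpace Ω]
    [TopologicalSpace.PseudoMetrizableSpace Ω] [TopologicalSpace.SeparableSpace Ω] [BorelSpace Ω]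
    {g : Ω → ℝ} (hg : LowerSemicontinuous g) (c : ℝ≥0∞) :
    IsClosed {μ : ProbabilityMeasure Ω | ∫⁻ x, ENNReal.ofReal (g x) ∂μ ≤ c} := by
  refine IsSeqClosed.isClosed fun μs μ hμs hlim ↦ ?_
  calc ∫⁻ x, ENNReal.ofReal (g x) ∂μ
      ≤ atTop.liminf (fun i ↦ ∫⁻ x, ENNReal.ofReal (g x) ∂(μs i)) :=
        hg.lintegral_le_liminf_lintegral_of_forall_isOpen fun _ hG ↦
          ProbabilityMeasure.le_liminf_measure_open_of_tendsto hlim hG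
    _ ≤ c := liminf_le_of_frequently_le' (Frequently.of_forall hμs)

lemma isTightMeasureSet_of_lintegral_le {Ω : Type*} [MeasurableSpace Ω] [TopologicalSpace Ω]
    {S : Set (Measure Ω)} {g : Ω → ℝ≥0∞} (hg_meas : Measurable g)
    (hg : Tendsto g (cocompact Ω) (𝓝 ∞)) {c : ℝ≥0∞} (hc : c ≠ ∞)
    (hS : ∀ μ ∈ S, ∫⁻ x, g x ∂μ ≤ c) :
    IsTightMeasureSet S := by
  refine isTightMeasureSet_iff_exists_isCompact_measure_compl_le.2 fun ε hε ↦ ?_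
  set M := c / ε + 1
  have hM0 : M ≠ 0 := by simp [M]
  have hMtop : M ≠ ∞ := add_ne_top.2 ⟨div_ne_top hc hε.ne', one_ne_top⟩
  have hcM : c / M ≤ ε := by
    rw [ENNReal.div_le_iff hM0 hMtop]
    rcases eq_or_ne ε ∞ with rfl | hε_top
    · simp [hM0]
    · calc c = ε * (c / ε) := (ENNReal.mul_div_cancel hε.ne' hε_top).symm
        _ ≤ ε * M := by gcongr; exact le_self_add
  obtain ⟨K, hK, hKM⟩ := mem_cocompact.1 (hg.eventually (Ici_mem_nhds hMtop.lt_top))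
  refine ⟨K, hK, fun μ hμ ↦ ?_⟩
  calc μ Kᶜ ≤ μ {x | M ≤ g x} := measure_mono hKM
    _ ≤ (∫⁻ x, g x ∂μ) / M := meas_ge_le_lintegral_div hg_meas.aemeasurable hM0 hMtop
    _ ≤ c / M := by gcongr; exact hS μ hμ
    _ ≤ ε := hcM

theorem isCompact_setOf_lintegral_ofReal_le {Ω : Type*} [MeasurableSpace Ω] [TopologicalSpace Ω]
    [TopologicalSpace.MetrizableSpace Ω] [TopologicalSpace.SeparableSpace Ω] [BorelSpace Ω]
    {g : Ω → ℝ} (hg : LowerSemicontinuous g) (hg_coer : Tendsto g (cocompact Ω) atTop)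
    {c : ℝ≥0∞} (hc : c ≠ ∞) :
    IsCompact {μ : ProbabilityMeasure Ω | ∫⁻ x, ENNReal.ofReal (g x) ∂μ ≤ c} := by
  have htight : IsTightMeasureSet
      {(μ : Measure Ω) | μ ∈ {μ : ProbabilityMeasure Ω | ∫⁻ x, ENNReal.ofReal (g x) ∂μ ≤ c}} :=
    isTightMeasureSet_of_lintegral_le hg.measurable.ennreal_ofReal
      (ENNReal.tendsto_ofReal_atTop.comp hg_coer) hc (by rintro _ ⟨μ, hμ, rfl⟩; exact hμ)
  simpa only [(isClosed_setOf_lintegral_ofReal_le hg c).closure_eq] using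
    isCompact_closure_of_isTightMeasureSet htight

theorem gvi_expected_loss_functional_coercive_general
    {Θ : Type*} [NormedAddCommGroup Θ] [NormedSpace ℝ Θ] [FiniteDimensional ℝ Θ]
    [MeasurableSpace Θ] [BorelSpace Θ]
    (f : Θ → ℝ) (hf : LowerSemicontinuous f)
    (B : ℝ)
    (hcoer : Tendsto f (Filter.comap (fun θ => ‖θ‖) atTop) atTop)
    (t : ℝ) :
    IsCompact {q : ProbabilityMeasure Θ |
      ∫⁻ θ, ENNReal.ofReal (f θ - B) ∂(q : Measure Θ) ≤ ENNReal.ofReal (t - B)} := by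
  rw [comap_norm_atTop, Metric.cobounded_eq_cocompact] at hcoer
  exact isCompact_setOf_lintegral_ofReal_le (hf.add lowerSemicontinuous_const)
    (tendsto_atTop_add_const_right _ (-B) hcoer) ofReal_ne_top

/-- **Coercivity of the expected-loss functional on `P(Θ)`.**
Let `Θ` be a finite-dimensional normed real vector space and `f : Θ → ℝ` lower
semicontinuous, bounded below by `B`, and coercive (`f θ → ∞` as `‖θ‖ → ∞`).  The
extended integral `∫ f dq ∈ (−∞, ∞]` is encoded as `B + ∫⁻ (f − B) dq`, so the sublevel
set `{q : ∫ f dq ≤ t}` of `Ψ(q) = ∫ f dq` reads `{q : ∫⁻ (f θ − B) dq ≤ t − B}`.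
Then for every `t : ℝ` this sublevel set is compact in the topology of weak convergence
on `ProbabilityMeasure Θ`; in particular `Ψ` is a coercive functional on `P(Θ)`. -/
theorem gvi_expected_loss_functional_coercive
    {Θ : Type*} [NormedAddCommGroup Θ] [NormedSpace ℝ Θ] [FiniteDimensional ℝ Θ]
    [MeasurableSpace Θ] [BorelSpace Θ]
    (f : Θ → ℝ) (hf : LowerSemicontinuous f)
    (B : ℝ) (hB : ∀ θ, B ≤ f θ)
    (hcoer : Tendsto f (Filter.comap (fun θ => ‖θ‖) atTop) atTop)
    (t : ℝ) :
    IsCompact {q : ProbabilityMeasure Θ |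
      ∫⁻ θ, ENNReal.ofReal (f θ - B) ∂(q : Measure Θ) ≤ ENNReal.ofReal (t - B)} :=
  gvi_expected_loss_functional_coercive_general f hf B hcoer t
end

section
/- Let Θ be a finite-dimensional normed real vector space, let f : Θ → ℝ be lower semicontinuous, bounded below, and coercive (f(θ) → ∞ as ‖θ‖ → ∞), with a unique global minimizer θ* (f(θ*) ≤ f(θ) for all θ and f(θ) > f(θ*) for all θ ≠ θ*). Let D : P(Θ) → [0, ∞] be any nonnegative functional, let Q ⊆ P(Θ) be nonempty, and assume there exists a sequence (p_k) in Q with D(p_k) < ∞ for every k and ∫_Θ f dp_k → f(θ*) as k → ∞. Define F̄_n(q) = ∫_Θ f dq + (1/n) D(q). Let (ε_n) be nonnegative reals with ε_n → 0 and let q_n ∈ Q satisfy F̄_n(q_n) ≤ inf_{q ∈ Q} F̄_n(q) + ε_n for every n. Then q_n converges weakly to the Dirac measure δ_{θ*}, F̄_n(q_n) → f(θ*), and ∫_Θ f dq_n → f(θ*). -/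
/-!
The recovery sequence `p` shows that `inf_Q F̄_n → f θ*`: for fixed `k` the penalty
`D (p k) / n` vanishes, and `∫ f dq ≥ f θ*` gives the matching lower bound. Hence both
`F̄_n (q_n)` and `∫ f dq_n` tend to `f θ*`. For weak convergence we use the portmanteau
theorem: on a closed set `F ∌ θ*`, lower semicontinuity, coercivity and uniqueness of the
minimizer give a gap `f ≥ f θ* + c`, and Markov's inequality gives
`c · q_n(F) ≤ ∫ f dq_n - f θ* → 0`.
-/

open MeasureTheory Filter Topology
open scoped ENNReal

section Gap

variable {X : Type*} [TopologicalSpace X] {f : X → ℝ}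

theorem LowerSemicontinuous.exists_pos_add_le_of_isCompact (hf : LowerSemicontinuous f)
    {K : Set X} (hK : IsCompact K) {a : ℝ} (h : ∀ x ∈ K, a < f x) :
    ∃ c > 0, ∀ x ∈ K, a + c ≤ f x := by
  rcases K.eq_empty_or_nonempty with rfl | hne
  · exact ⟨1, one_pos, by simp⟩
  obtain ⟨x₀, hx₀, hmin⟩ := (hf.lowerSemicontinuousOn K).exists_isMinOn hne hK
  exact ⟨f x₀ - a, sub_pos.2 (h x₀ hx₀),
    fun x hx => by linarith [isMinOn_iff.1 hmin x hx]⟩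

theorem LowerSemicontinuous.exists_pos_add_le_of_isClosed (hf : LowerSemicontinuous f)
    (hcoer : Tendsto f (cocompact X) atTop) {x₀ : X} (hx₀ : ∀ x, x ≠ x₀ → f x₀ < f x)
    {F : Set X} (hF : IsClosed F) (hx₀F : x₀ ∉ F) :
    ∃ c > 0, ∀ x ∈ F, f x₀ + c ≤ f x := by
  obtain ⟨K, hK, hfK⟩ := mem_cocompact.1 (hcoer.eventually_ge_atTop (f x₀ + 1))
  obtain ⟨c, hc, hcK⟩ := hf.exists_pos_add_le_of_isCompact (hK.inter_right hF)
    fun x hx => hx₀ x fun h => hx₀F (h ▸ hx.2)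
  refine ⟨min c 1, by positivity, fun x hx => ?_⟩
  by_cases hxK : x ∈ K
  · linarith [hcK x ⟨hxK, hx⟩, min_le_left c 1]
  · linarith [show f x₀ + 1 ≤ f x from hfK hxK, min_le_right c 1]

end Gap

section Concentration

variable {X : Type*} [MeasurableSpace X]

theorem le_lintegral_of_forall_le (μ : Measure X) [IsProbabilityMeasure μ] {g : X → ℝ≥0∞}
    {m : ℝ≥0∞} (hm : ∀ x, m ≤ g x) : m ≤ ∫⁻ x, g x ∂μ := by
  simpa using lintegral_mono (μ := μ) (f := fun _ => m) hm

theorem add_mul_measure_le_lintegral (μ : Measure X) [IsProbabilityMeasure μ]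
    {g : X → ℝ≥0∞} {m c : ℝ≥0∞} {s : Set X} (hs : MeasurableSet s) (hm : ∀ x, m ≤ g x)
    (hc : ∀ x ∈ s, m + c ≤ g x) : m + c * μ s ≤ ∫⁻ x, g x ∂μ := by
  calc m + c * μ s = ∫⁻ x, m + s.indicator (fun _ => c) x ∂μ := by
        rw [lintegral_add_left measurable_const, lintegral_indicator_const hs, lintegral_const,
          measure_univ, mul_one]
    _ ≤ ∫⁻ x, g x ∂μ := lintegral_mono fun x => by
        by_cases hx : x ∈ s
        · simpa [hx] using hc x hx
        · simpa [hx] using hm x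

theorem tendsto_measure_zero_of_tendsto_lintegral {ι : Type*} {l : Filter ι}
    {μ : ι → Measure X} [∀ i, IsProbabilityMeasure (μ i)] {g : X → ℝ≥0∞} {m c : ℝ≥0∞}
    {s : Set X} (hs : MeasurableSet s) (hm : ∀ x, m ≤ g x) (hmtop : m ≠ ⊤)
    (hc : ∀ x ∈ s, m + c ≤ g x) (hc0 : c ≠ 0) (hctop : c ≠ ⊤)
    (hg : Tendsto (fun i => ∫⁻ x, g x ∂μ i) l (𝓝 m)) :
    Tendsto (fun i => μ i s) l (𝓝 0) := by
  have hbound : ∀ i, μ i s ≤ (∫⁻ x, g x ∂μ i - m) / c := fun i => by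
    rw [ENNReal.le_div_iff_mul_le (Or.inl hc0) (Or.inl hctop), mul_comm]
    exact ENNReal.le_sub_of_add_le_left hmtop (add_mul_measure_le_lintegral (μ i) hs hm hc)
  have hlim : Tendsto (fun i => (∫⁻ x, g x ∂μ i - m) / c) l (𝓝 0) := by
    simpa using ENNReal.Tendsto.div_const (ENNReal.Tendsto.sub hg tendsto_const_nhds
      (Or.inr hmtop)) (Or.inr hc0)
  exact tendsto_of_tendsto_of_tendsto_of_le_of_le tendsto_const_nhds hlim (fun _ => zero_le)
    hbound

theorem ProbabilityMeasure.tendsto_dirac_of_forall_isClosed [TopologicalSpace X]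
    [OpensMeasurableSpace X] {ι : Type*} {L : Filter ι} [L.IsCountablyGenerated]
    {μs : ι → ProbabilityMeasure X} {x : X}
    (h : ∀ F, IsClosed F → x ∉ F → Tendsto (fun i => (μs i : Measure X) F) L (𝓝 0)) :
    Tendsto μs L (𝓝 ⟨Measure.dirac x, inferInstance⟩) := by
  rcases L.eq_or_neBot with rfl | hL
  · exact tendsto_bot
  refine tendsto_of_forall_isClosed_limsup_le' fun F hF => ?_
  by_cases hxF : x ∈ F
  · simpa [Measure.dirac_apply' x hF.measurableSet, hxF] using
      limsup_le_of_le (by isBoundedDefault) (Eventually.of_forall fun i => prob_le_one)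
  · simp [(h F hF hxF).limsup_eq, Measure.dirac_apply' x hF.measurableSet, hxF]

end Concentration

theorem tendsto_biInf_add_inv_natCast_mul {α : Type*} {I D : α → ℝ≥0∞} {Q : Set α}
    {m : ℝ≥0∞} (hlow : ∀ q ∈ Q, m ≤ I q) {p : ℕ → α} (hpQ : ∀ k, p k ∈ Q)
    (hpD : ∀ k, D (p k) ≠ ⊤) (hpI : Tendsto (I ∘ p) atTop (𝓝 m)) :
    Tendsto (fun n : ℕ => ⨅ q ∈ Q, I q + (n : ℝ≥0∞)⁻¹ * D q) atTop (𝓝 m) := by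
  refine tendsto_order.2 ⟨fun a ha => Eventually.of_forall fun n =>
    ha.trans_le (le_iInf₂ fun q hq => (hlow q hq).trans le_self_add), fun a ha => ?_⟩
  obtain ⟨k, hk⟩ := (hpI.eventually_lt_const ha).exists
  have hpen : Tendsto (fun n : ℕ => I (p k) + (n : ℝ≥0∞)⁻¹ * D (p k)) atTop (𝓝 (I (p k))) := by
    simpa using tendsto_const_nhds.add
      (ENNReal.Tendsto.mul_const ENNReal.tendsto_inv_nat_nhds_zero (Or.inr (hpD k)))
  filter_upwards [hpen.eventually_lt_const hk] with n hn
  exact (iInf₂_le (p k) (hpQ k)).trans_lt hn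

/-- The extended integral `∫ f dq ∈ (-∞, ∞]` is encoded as `B + ∫⁻ (f - B) dq`, so the
objective `F̄_n` appears shifted by `-B`. -/
theorem gvi_auxiliary_epsilon_minimizers_consistent_general
    {Θ : Type*} [NormedAddCommGroup Θ] [NormedSpace ℝ Θ] [FiniteDimensional ℝ Θ]
    [MeasurableSpace Θ] [BorelSpace Θ]
    (f : Θ → ℝ) (hf : LowerSemicontinuous f)
    (B : ℝ) (hB : ∀ θ, B ≤ f θ)
    (hcoer : Tendsto f (Filter.comap (fun θ => ‖θ‖) atTop) atTop)
    (θs : Θ) (hmin : ∀ θ, f θs ≤ f θ) (huniq : ∀ θ, θ ≠ θs → f θs < f θ)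
    (D : ProbabilityMeasure Θ → ℝ≥0∞)
    (Q : Set (ProbabilityMeasure Θ))
    (p : ℕ → ProbabilityMeasure Θ) (hpQ : ∀ k, p k ∈ Q) (hpD : ∀ k, D (p k) < ⊤)
    (hpI : Tendsto (fun k => ∫⁻ θ, ENNReal.ofReal (f θ - B) ∂(p k : Measure Θ))
      atTop (nhds (ENNReal.ofReal (f θs - B))))
    (ε : ℕ → ℝ) (hεlim : Tendsto ε atTop (nhds 0))
    (qn : ℕ → ProbabilityMeasure Θ)
    (hqn : ∀ n : ℕ, 1 ≤ n →
      (∫⁻ θ, ENNReal.ofReal (f θ - B) ∂(qn n : Measure Θ)) + ((n : ℝ≥0∞))⁻¹ * D (qn n) ≤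
      (⨅ q ∈ Q, (∫⁻ θ, ENNReal.ofReal (f θ - B) ∂(q : Measure Θ)) + ((n : ℝ≥0∞))⁻¹ * D q)
        + ENNReal.ofReal (ε n)) :
    Tendsto qn atTop
        (nhds (⟨Measure.dirac θs, inferInstance⟩ : ProbabilityMeasure Θ)) ∧
    Tendsto
      (fun n : ℕ =>
        (∫⁻ θ, ENNReal.ofReal (f θ - B) ∂(qn n : Measure Θ)) + ((n : ℝ≥0∞))⁻¹ * D (qn n))
      atTop (nhds (ENNReal.ofReal (f θs - B))) ∧
    Tendsto (fun n : ℕ => ∫⁻ θ, ENNReal.ofReal (f θ - B) ∂(qn n : Measure Θ))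
      atTop (nhds (ENNReal.ofReal (f θs - B))) := by
  set m := ENNReal.ofReal (f θs - B)
  set I : ProbabilityMeasure Θ → ℝ≥0∞ := fun q => ∫⁻ θ, ENNReal.ofReal (f θ - B) ∂(q : Measure Θ)
  have hm : ∀ θ, m ≤ ENNReal.ofReal (f θ - B) :=
    fun θ => ENNReal.ofReal_le_ofReal (by linarith [hmin θ])
  have hlow : ∀ q, m ≤ I q := fun q => le_lintegral_of_forall_le _ hm
  have hV := tendsto_biInf_add_inv_natCast_mul (fun q _ => hlow q) hpQ (fun k => (hpD k).ne) hpI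
  have hobj : Tendsto (fun n : ℕ => I (qn n) + (n : ℝ≥0∞)⁻¹ * D (qn n)) atTop (𝓝 m) := by
    refine tendsto_of_tendsto_of_tendsto_of_le_of_le' tendsto_const_nhds
      (by simpa using hV.add (ENNReal.tendsto_ofReal hεlim))
      (Eventually.of_forall fun n => (hlow _).trans le_self_add) ?_
    filter_upwards [eventually_ge_atTop 1] with n hn using hqn n hn
  have hI : Tendsto (fun n => I (qn n)) atTop (𝓝 m) :=
    tendsto_of_tendsto_of_tendsto_of_le_of_le tendsto_const_nhds hobj (fun n => hlow _)
      fun n => le_self_add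
  refine ⟨ProbabilityMeasure.tendsto_dirac_of_forall_isClosed fun F hFc hθF => ?_, hobj, hI⟩
  have : ProperSpace Θ := FiniteDimensional.proper ℝ Θ
  have hcoer' : Tendsto f (cocompact Θ) atTop := by
    rwa [← Metric.cobounded_eq_cocompact, ← comap_norm_atTop]
  obtain ⟨c, hc, hgap⟩ := hf.exists_pos_add_le_of_isClosed hcoer' huniq hFc hθF
  refine tendsto_measure_zero_of_tendsto_lintegral hFc.measurableSet hm ENNReal.ofReal_ne_top
    (fun θ hθ => ?_) (ENNReal.ofReal_pos.2 hc).ne' ENNReal.ofReal_ne_top hI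
  rw [← ENNReal.ofReal_add (by linarith [hB θs]) hc.le]
  exact ENNReal.ofReal_le_ofReal (by linarith [hgap θ hθ])

/-- **Consistency of ε-minimizers of the auxiliary GVI objective.**
Let `Θ` be a finite-dimensional normed real vector space, `f : Θ → ℝ` lower
semicontinuous, bounded below by `B`, coercive, with a unique global minimizer `θs`.
Let `D : P(Θ) → [0, ∞]` and `Q ⊆ P(Θ)` nonempty, with a sequence `p_k ∈ Q` with
`D (p_k) < ∞` and `∫ f dp_k → f θs`.  The extended integral `∫ f dq ∈ (−∞, ∞]` is
encoded as `B + I q`, `I q = ∫⁻ (f θ − B) dq`, and the auxiliary objective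
`F̄_n(q) = ∫ f dq + (1/n) D q` is encoded (shifted by `−B`) as `I q + (1/n) D q`.
If `ε_n ≥ 0`, `ε_n → 0`, and `q_n ∈ Q` satisfies `F̄_n(q_n) ≤ inf_{q ∈ Q} F̄_n(q) + ε_n`
for every `n`, then `q_n → δ_{θs}` weakly, `F̄_n(q_n) → f θs`, and `∫ f dq_n → f θs`. -/
theorem gvi_auxiliary_epsilon_minimizers_consistent
    {Θ : Type*} [NormedAddCommGroup Θ] [NormedSpace ℝ Θ] [FiniteDimensional ℝ Θ]
    [MeasurableSpace Θ] [BorelSpace Θ]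
    (f : Θ → ℝ) (hf : LowerSemicontinuous f)
    (B : ℝ) (hB : ∀ θ, B ≤ f θ)
    (hcoer : Tendsto f (Filter.comap (fun θ => ‖θ‖) atTop) atTop)
    (θs : Θ) (hmin : ∀ θ, f θs ≤ f θ) (huniq : ∀ θ, θ ≠ θs → f θs < f θ)
    (D : ProbabilityMeasure Θ → ℝ≥0∞)
    (Q : Set (ProbabilityMeasure Θ)) (hQ : Q.Nonempty)
    (p : ℕ → ProbabilityMeasure Θ) (hpQ : ∀ k, p k ∈ Q) (hpD : ∀ k, D (p k) < ⊤)
    (hpI : Tendsto (fun k => ∫⁻ θ, ENNReal.ofReal (f θ - B) ∂(p k : Measure Θ))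
      atTop (nhds (ENNReal.ofReal (f θs - B))))
    (ε : ℕ → ℝ) (hε0 : ∀ n, 0 ≤ ε n) (hεlim : Tendsto ε atTop (nhds 0))
    (qn : ℕ → ProbabilityMeasure Θ) (hqnQ : ∀ n, qn n ∈ Q)
    (hqn : ∀ n : ℕ, 1 ≤ n →
      (∫⁻ θ, ENNReal.ofReal (f θ - B) ∂(qn n : Measure Θ)) + ((n : ℝ≥0∞))⁻¹ * D (qn n) ≤
      (⨅ q ∈ Q, (∫⁻ θ, ENNReal.ofReal (f θ - B) ∂(q : Measure Θ)) + ((n : ℝ≥0∞))⁻¹ * D q)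
        + ENNReal.ofReal (ε n)) :
    Tendsto qn atTop
        (nhds (⟨Measure.dirac θs, inferInstance⟩ : ProbabilityMeasure Θ)) ∧
    Tendsto
      (fun n : ℕ =>
        (∫⁻ θ, ENNReal.ofReal (f θ - B) ∂(qn n : Measure Θ)) + ((n : ℝ≥0∞))⁻¹ * D (qn n))
      atTop (nhds (ENNReal.ofReal (f θs - B))) ∧
    Tendsto (fun n : ℕ => ∫⁻ θ, ENNReal.ofReal (f θ - B) ∂(qn n : Measure Θ))
      atTop (nhds (ENNReal.ofReal (f θs - B))) :=
  gvi_auxiliary_epsilon_minimizers_consistent_general f hf B hB hcoer θs hmin huniq D Q p hpQ hpD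
    hpI ε hεlim qn hqn
end

section
/- Let (Ω, F, ℙ) be a probability space, (E, ℰ) a measurable space, and (X_i)_{i≥1} an i.i.d. sequence of E-valued random variables with common distribution μ. Let A ⊆ ℝ^d be compact with θ* ∈ A, and let ℓ : ℝ^d × E → ℝ be jointly measurable with θ ↦ ℓ(θ, x) continuous on A for every x ∈ E. Assume that h(x) := sup_{θ ∈ A} |ℓ(θ, x)| is measurable and μ-integrable. Let (ν_n) be Borel probability measures on ℝ^d with ν_n(A) = 1 for every n, converging weakly to the Dirac measure δ_{θ*}. Then ℙ-almost surely, (1/n) Σ_{i=1}^n ∫_{ℝ^d} ℓ(θ, X_i) dν_n(θ) → ∫_E ℓ(θ*, x) dμ(x) as n → ∞. -/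
/-!
Write `Z n x = ∫ ℓ(θ, x) dν_n(θ) - ℓ(θs, x)`, so that the average in question is the classical
empirical mean of `ℓ(θs, X_i)`, handled by the strong law, plus the triangular-array average of
`Z n (X_i)`. Since `ν_n` puts full mass on `A` and concentrates at `θs`, near which `ℓ(·, x)` is
continuous on `A`, each `Z n x` tends to `0`, and `|Z n x| ≤ 2 h x`. For `n ≥ N` the row
`Z n (X_i)` is dominated by the envelope `sup_{m ≥ N} |Z m (X_i)|`, an i.i.d. integrable sequence to
which the strong law applies for all `N` simultaneously; by dominated convergence the means of these
envelopes tend to `0` as `N → ∞`.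
-/

open MeasureTheory ProbabilityTheory Filter Topology

section DiracLimit

variable {X ι : Type*} [MeasurableSpace X]

theorem abs_integral_le_add_mul_measureReal_compl {ν : Measure X} [IsProbabilityMeasure ν]
    {A U : Set X} (hU : MeasurableSet U) (hνA : ∀ᵐ θ ∂ν, θ ∈ A) {g : X → ℝ} {ε C : ℝ}
    (hε : 0 ≤ ε) (hgU : ∀ θ ∈ A ∩ U, |g θ| ≤ ε) (hgA : ∀ θ ∈ A, |g θ| ≤ C) :
    |∫ θ, g θ ∂ν| ≤ ε + C * ν.real Uᶜ := by
  have hbound : ∀ᵐ θ ∂ν, ‖g θ‖ ≤ ε + Uᶜ.indicator (fun _ => C) θ := by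
    filter_upwards [hνA] with θ hθ
    by_cases hθU : θ ∈ U
    · simpa [hθU] using hgU θ ⟨hθ, hθU⟩
    · simpa [hθU] using (hgA θ hθ).trans (le_add_of_nonneg_left hε)
  have hint : Integrable (fun θ => ε + Uᶜ.indicator (fun _ => C) θ) ν :=
    (integrable_const ε).add ((integrable_const C).indicator hU.compl)
  calc |∫ θ, g θ ∂ν| ≤ ∫ θ, (ε + Uᶜ.indicator (fun _ => C) θ) ∂ν :=
        norm_integral_le_of_norm_le hint hbound
    _ = ε + C * ν.real Uᶜ := by
        rw [integral_add (integrable_const ε) ((integrable_const C).indicator hU.compl),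
          integral_indicator_const C hU.compl]
        simp [mul_comm]

variable [TopologicalSpace X] [OpensMeasurableSpace X] [HasOuterApproxClosed X]
  {L : Filter ι} {ν : ι → ProbabilityMeasure X} {a : X}

theorem tendsto_measureReal_compl_of_tendsto_dirac
    (hν : Tendsto ν L (𝓝 ⟨Measure.dirac a, inferInstance⟩)) {U : Set X} (hU : IsOpen U)
    (ha : a ∈ U) : Tendsto (fun i => (ν i : Measure X).real Uᶜ) L (𝓝 0) := by
  have hfrontier : a ∉ frontier U := by
    rw [hU.frontier_eq]
    exact fun h => h.2 ha
  have hlim := ProbabilityMeasure.tendsto_measure_of_null_frontier_of_tendsto' hν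
    (E := Uᶜ) (by simpa [Measure.dirac_apply' _ isClosed_frontier.measurableSet] using hfrontier)
  have ha' : (Measure.dirac a) Uᶜ = 0 := by
    simp [Measure.dirac_apply' _ hU.measurableSet.compl, ha]
  simpa [Measure.real, ha', Function.comp_def] using
    (ENNReal.tendsto_toReal ENNReal.zero_ne_top).comp (ha' ▸ hlim)

theorem tendsto_integral_of_tendsto_dirac
    (hν : Tendsto ν L (𝓝 ⟨Measure.dirac a, inferInstance⟩)) {A : Set X}
    (hνA : ∀ i, ∀ᵐ θ ∂(ν i : Measure X), θ ∈ A) {φ : X → ℝ} (hφ : Measurable φ)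
    (hφa : ContinuousWithinAt φ A a) {M : ℝ} (hM : ∀ θ ∈ A, |φ θ| ≤ M) :
    Tendsto (fun i => ∫ θ, φ θ ∂(ν i : Measure X)) L (𝓝 (φ a)) := by
  rw [Metric.tendsto_nhds]
  intro ε hε
  obtain ⟨U, hU, haU, hUA⟩ := mem_nhdsWithin.1 <|
    Metric.tendsto_nhds.1 hφa (ε / 2) (half_pos hε)
  have hsmall : ∀ᶠ i in L, (M + |φ a|) * (ν i : Measure X).real Uᶜ < ε / 2 := by
    refine ((tendsto_measureReal_compl_of_tendsto_dirac hν hU haU).const_mul _)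
      |>.eventually_lt_const ?_
    simpa using half_pos hε
  filter_upwards [hsmall] with i hi
  have hφint : Integrable φ (ν i : Measure X) :=
    (integrable_const M).mono' hφ.aestronglyMeasurable <| by
      filter_upwards [hνA i] with θ hθ using hM θ hθ
  have hbound := abs_integral_le_add_mul_measureReal_compl (g := fun θ => φ θ - φ a)
    (C := M + |φ a|) hU.measurableSet (hνA i) (half_pos hε).le
    (fun θ hθ => (Real.dist_eq _ _ ▸ hUA ⟨hθ.2, hθ.1⟩ : dist (φ θ) (φ a) < ε / 2).le)
    (fun θ hθ => (abs_sub _ _).trans (by linarith [hM θ hθ]))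
  rw [integral_sub hφint (integrable_const _), integral_const] at hbound
  rw [Real.dist_eq]
  simp only [probReal_univ, one_smul] at hbound
  linarith

end DiracLimit

section TailSup

variable {E : Type*} {Z : ℕ → E → ℝ} {H : E → ℝ}

noncomputable def tailSup (Z : ℕ → E → ℝ) (N : ℕ) (x : E) : ℝ :=
  ⨆ m, |Z (N + m) x|

theorem abs_le_tailSup (hZH : ∀ n x, |Z n x| ≤ H x) {N n : ℕ} (hNn : N ≤ n) (x : E) :
    |Z n x| ≤ tailSup Z N x := by
  obtain ⟨m, rfl⟩ := Nat.exists_eq_add_of_le hNn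
  exact le_ciSup (f := fun m => |Z (N + m) x|) ⟨H x, by rintro _ ⟨k, rfl⟩; exact hZH _ x⟩ m

theorem tailSup_nonneg (hZH : ∀ n x, |Z n x| ≤ H x) (N : ℕ) (x : E) : 0 ≤ tailSup Z N x :=
  (abs_nonneg _).trans (abs_le_tailSup hZH le_rfl x)

theorem tailSup_le (hZH : ∀ n x, |Z n x| ≤ H x) (N : ℕ) (x : E) : tailSup Z N x ≤ H x :=
  ciSup_le fun _ => hZH _ x

theorem tendsto_tailSup_zero (hZH : ∀ n x, |Z n x| ≤ H x)
    {x : E} (hZx : Tendsto (fun n => Z n x) atTop (𝓝 0)) :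
    Tendsto (fun N => tailSup Z N x) atTop (𝓝 0) := by
  rw [Metric.tendsto_atTop] at hZx ⊢
  intro ε hε
  obtain ⟨N, hN⟩ := hZx (ε / 2) (half_pos hε)
  refine ⟨N, fun M hM => ?_⟩
  have hsup : tailSup Z M x ≤ ε / 2 := ciSup_le fun m => by
    simpa [Real.dist_eq] using (hN (M + m) (by omega)).le
  rw [Real.dist_eq, sub_zero, abs_of_nonneg (tailSup_nonneg hZH M x)]
  linarith

variable [MeasurableSpace E]

theorem measurable_tailSup (hZ : ∀ n, Measurable (Z n)) (N : ℕ) : Measurable (tailSup Z N) :=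
  Measurable.iSup fun m => (hZ (N + m)).abs

theorem tendsto_integral_tailSup_zero {μ : Measure E} (hZ : ∀ n, Measurable (Z n))
    (hH : Integrable H μ) (hZH : ∀ n x, |Z n x| ≤ H x)
    (hZlim : ∀ x, Tendsto (fun n => Z n x) atTop (𝓝 0)) :
    Tendsto (fun N => ∫ x, tailSup Z N x ∂μ) atTop (𝓝 0) := by
  simpa using tendsto_integral_of_dominated_convergence H
    (fun N => (measurable_tailSup hZ N).aestronglyMeasurable) hH
    (fun N => ae_of_all _ fun x => by
      rw [Real.norm_eq_abs, abs_of_nonneg (tailSup_nonneg hZH N x)]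
      exact tailSup_le hZH N x)
    (ae_of_all _ fun x => tendsto_tailSup_zero hZH (hZlim x))

end TailSup

section TriangularStrongLaw

variable {Ω E : Type*} [MeasurableSpace Ω] [MeasurableSpace E] {P : Measure Ω} {μ : Measure E}
  {X : ℕ → Ω → E}

theorem strong_law_ae_comp (hXmeas : ∀ i, Measurable (X i))
    (hXindep : Pairwise fun i j => IndepFun (X i) (X j) P) (hXdist : ∀ i, P.map (X i) = μ)
    {F : E → ℝ} (hF : Measurable F) (hFint : Integrable F μ) :
    ∀ᵐ ω ∂P, Tendsto (fun n : ℕ => (1 / (n : ℝ)) * ∑ i ∈ Finset.Icc 1 n, F (X i ω))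
      atTop (𝓝 (∫ x, F x ∂μ)) := by
  have hident : ∀ i, IdentDistrib (F ∘ X (i + 1)) (F ∘ X 1) P P := fun i =>
    ⟨(hF.comp (hXmeas _)).aemeasurable, (hF.comp (hXmeas _)).aemeasurable, by
      rw [← Measure.map_map hF (hXmeas _), ← Measure.map_map hF (hXmeas _), hXdist, hXdist]⟩
  have hlaw := strong_law_ae_real (fun i => F ∘ X (i + 1))
    ((integrable_map_measure hF.aestronglyMeasurable (hXmeas 1).aemeasurable).1 (hXdist 1 ▸ hFint))
    (fun i j hij => (hXindep (by omega : i + 1 ≠ j + 1)).comp hF hF) hident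
  have hmean : P[F ∘ X 1] = ∫ x, F x ∂μ := by
    rw [← hXdist 1, integral_map (hXmeas 1).aemeasurable hF.aestronglyMeasurable]
    rfl
  filter_upwards [hlaw] with ω hω
  rw [hmean] at hω
  refine hω.congr fun n => ?_
  rw [← Finset.Ico_add_one_right_eq_Icc, Finset.sum_Ico_eq_sum_range, div_eq_inv_mul, one_div]
  simp [add_comm]

theorem strong_law_ae_triangular_of_tendsto_zero (hXmeas : ∀ i, Measurable (X i))
    (hXindep : Pairwise fun i j => IndepFun (X i) (X j) P) (hXdist : ∀ i, P.map (X i) = μ)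
    {Z : ℕ → E → ℝ} (hZ : ∀ n, Measurable (Z n)) {H : E → ℝ} (hH : Integrable H μ)
    (hZH : ∀ n x, |Z n x| ≤ H x) (hZlim : ∀ x, Tendsto (fun n => Z n x) atTop (𝓝 0)) :
    ∀ᵐ ω ∂P, Tendsto (fun n : ℕ => (1 / (n : ℝ)) * ∑ i ∈ Finset.Icc 1 n, Z n (X i ω))
      atTop (𝓝 0) := by
  have htail : ∀ N, Integrable (tailSup Z N) μ := fun N =>
    hH.mono' (measurable_tailSup hZ N).aestronglyMeasurable <| ae_of_all _ fun x => by
      rw [Real.norm_eq_abs, abs_of_nonneg (tailSup_nonneg hZH N x)]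
      exact tailSup_le hZH N x
  filter_upwards [ae_all_iff.2 fun N => strong_law_ae_comp hXmeas hXindep
    hXdist (measurable_tailSup hZ N) (htail N)] with ω hω
  rw [Metric.tendsto_nhds]
  intro ε hε
  obtain ⟨N, hN⟩ :=
    ((tendsto_integral_tailSup_zero hZ hH hZH hZlim).eventually_lt_const hε).exists
  filter_upwards [(hω N).eventually_lt_const hN, eventually_ge_atTop N] with n hn hNn
  have hn0 : (0 : ℝ) ≤ 1 / n := by positivity
  calc dist ((1 / (n : ℝ)) * ∑ i ∈ Finset.Icc 1 n, Z n (X i ω)) 0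
      ≤ (1 / (n : ℝ)) * ∑ i ∈ Finset.Icc 1 n, |Z n (X i ω)| := by
        rw [Real.dist_eq, sub_zero, abs_mul, abs_of_nonneg hn0]
        gcongr
        exact Finset.abs_sum_le_sum_abs _ _
    _ ≤ (1 / (n : ℝ)) * ∑ i ∈ Finset.Icc 1 n, tailSup Z N (X i ω) := by
        gcongr
        exact abs_le_tailSup hZH hNn _
    _ < ε := hn

end TriangularStrongLaw

theorem gvi_triangular_slln_iid_general
    {Ω : Type*} [MeasurableSpace Ω] (P : Measure Ω)
    {E : Type*} [MeasurableSpace E]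
    (μ : Measure E)
    (X : ℕ → Ω → E) (hXmeas : ∀ i, Measurable (X i))
    (hXindep : iIndepFun X P)
    (hXdist : ∀ i, Measure.map (X i) P = μ)
    {d : ℕ} (A : Set (EuclideanSpace ℝ (Fin d))) (hA : IsCompact A)
    (θs : EuclideanSpace ℝ (Fin d)) (hθs : θs ∈ A)
    (ℓ : EuclideanSpace ℝ (Fin d) → E → ℝ)
    (hℓmeas : Measurable (Function.uncurry ℓ))
    (hℓcont : ∀ x, ContinuousOn (fun θ => ℓ θ x) A)
    (hsupint : Integrable (fun x => sSup ((fun θ => |ℓ θ x|) '' A)) μ)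
    (ν : ℕ → ProbabilityMeasure (EuclideanSpace ℝ (Fin d)))
    (hνA : ∀ n, (ν n : Measure (EuclideanSpace ℝ (Fin d))) A = 1)
    (hνlim : Tendsto ν atTop
      (nhds (⟨Measure.dirac θs, inferInstance⟩ : ProbabilityMeasure (EuclideanSpace ℝ (Fin d))))) :
    ∀ᵐ ω ∂P,
      Tendsto
        (fun n : ℕ => (1 / (n : ℝ)) *
          ∑ i ∈ Finset.Icc 1 n, ∫ θ, ℓ θ (X i ω) ∂(ν n : Measure (EuclideanSpace ℝ (Fin d))))
        atTop (nhds (∫ x, ℓ θs x ∂μ)) := by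
  set h := fun x => sSup ((fun θ => |ℓ θ x|) '' A)
  have hℓh : ∀ x, ∀ θ ∈ A, |ℓ θ x| ≤ h x := fun x θ hθ =>
    le_csSup (hA.image_of_continuousOn (hℓcont x).abs).bddAbove (Set.mem_image_of_mem _ hθ)
  have hνA' : ∀ n, ∀ᵐ θ ∂(ν n : Measure (EuclideanSpace ℝ (Fin d))), θ ∈ A := fun n =>
    (ae_mem_iff_measure_eq hA.isClosed.measurableSet.nullMeasurableSet).2 (by simp [hνA n])
  have hℓθs : Measurable (ℓ θs) := hℓmeas.comp measurable_prodMk_left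
  have hℓx : ∀ x, Measurable fun θ => ℓ θ x := fun x => hℓmeas.comp measurable_prodMk_right
  set Z : ℕ → E → ℝ := fun n x => ∫ θ, ℓ θ x ∂(ν n : Measure _) - ℓ θs x
  have hZmeas : ∀ n, Measurable (Z n) := fun n =>
    (hℓmeas.stronglyMeasurable.integral_prod_left.measurable).sub hℓθs
  have hZH : ∀ n x, |Z n x| ≤ 2 * h x := fun n x => by
    have hint : |∫ θ, ℓ θ x ∂(ν n : Measure _)| ≤ h x := by
      have := norm_integral_le_of_norm_le_const (f := fun θ => ℓ θ x) (by
        filter_upwards [hνA' n] with θ hθ using hℓh x θ hθ)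
      rwa [probReal_univ, mul_one] at this
    linarith [abs_sub (∫ θ, ℓ θ x ∂(ν n : Measure _)) (ℓ θs x), hℓh x θs hθs]
  have hZlim : ∀ x, Tendsto (fun n => Z n x) atTop (𝓝 0) := fun x => by
    simpa [Z] using (tendsto_integral_of_tendsto_dirac hνlim hνA' (hℓx x)
      (hℓcont x θs hθs) (hℓh x)).sub_const (ℓ θs x)
  have hindep : Pairwise fun i j => IndepFun (X i) (X j) P := fun i j hij => hXindep.indepFun hij
  filter_upwards [strong_law_ae_comp hXmeas hindep hXdist hℓθs
      (hsupint.mono' hℓθs.aestronglyMeasurable (ae_of_all _ fun x => hℓh x θs hθs)),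
    strong_law_ae_triangular_of_tendsto_zero hXmeas hindep hXdist hZmeas (hsupint.const_mul 2)
      hZH hZlim]
    with ω hmain hrest
  simpa [Z, ← mul_add, ← Finset.sum_add_distrib] using hmain.add hrest

/-- **Strong law of large numbers for the GVI triangular array under independence.**
Let `(Ω, ℙ)` be a probability space, `(X_i)_{i ≥ 1}` i.i.d. `E`-valued with common law
`μ`.  Let `A ⊆ ℝ^d` be compact with `θs ∈ A`, `ℓ : ℝ^d × E → ℝ` jointly measurable and
continuous in `θ` on `A` for each `x`, and `h x = sup_{θ ∈ A} |ℓ(θ, x)|` measurable and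
`μ`-integrable.  Let `(ν_n)` be Borel probability measures on `ℝ^d` with `ν_n A = 1`,
converging weakly to `δ_{θs}`.  Then `ℙ`-a.s.,
`(1/n) ∑_{i=1}^n ∫ ℓ(θ, X_i) dν_n(θ) → ∫ ℓ(θs, x) dμ(x)`. -/
theorem gvi_triangular_slln_iid
    {Ω : Type*} [MeasurableSpace Ω] (P : Measure Ω) [IsProbabilityMeasure P]
    {E : Type*} [MeasurableSpace E]
    (μ : Measure E) [IsProbabilityMeasure μ]
    (X : ℕ → Ω → E) (hXmeas : ∀ i, Measurable (X i))
    (hXindep : iIndepFun X P)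
    (hXdist : ∀ i, Measure.map (X i) P = μ)
    {d : ℕ} (A : Set (EuclideanSpace ℝ (Fin d))) (hA : IsCompact A)
    (θs : EuclideanSpace ℝ (Fin d)) (hθs : θs ∈ A)
    (ℓ : EuclideanSpace ℝ (Fin d) → E → ℝ)
    (hℓmeas : Measurable (Function.uncurry ℓ))
    (hℓcont : ∀ x, ContinuousOn (fun θ => ℓ θ x) A)
    (hsupmeas : Measurable fun x => sSup ((fun θ => |ℓ θ x|) '' A))
    (hsupint : Integrable (fun x => sSup ((fun θ => |ℓ θ x|) '' A)) μ)
    (ν : ℕ → ProbabilityMeasure (EuclideanSpace ℝ (Fin d)))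
    (hνA : ∀ n, (ν n : Measure (EuclideanSpace ℝ (Fin d))) A = 1)
    (hνlim : Tendsto ν atTop
      (nhds (⟨Measure.dirac θs, inferInstance⟩ : ProbabilityMeasure (EuclideanSpace ℝ (Fin d))))) :
    ∀ᵐ ω ∂P,
      Tendsto
        (fun n : ℕ => (1 / (n : ℝ)) *
          ∑ i ∈ Finset.Icc 1 n, ∫ θ, ℓ θ (X i ω) ∂(ν n : Measure (EuclideanSpace ℝ (Fin d))))
        atTop (nhds (∫ x, ℓ θs x ∂μ)) :=
  gvi_triangular_slln_iid_general P μ X hXmeas hXindep hXdist A hA θs hθs ℓ hℓmeas hℓcont hsupint ν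
    hνA hνlim
end

section
/- Let a, m ∈ ℝ and s > 0, and let (μ_n) be a real sequence with μ_n → a and (σ_n) a sequence of positive reals with σ_n → 0. Then there exist R > 0 and N ∈ ℕ such that for all n ≥ N and all θ ∈ ℝ with |θ − a| ≥ R, the normal density values satisfy φ(θ; μ_n, σ_n²) ≤ φ(θ; m, s²). In particular, the compact set A = [a − R, a + R] contains a in its interior and the Gaussian prior density φ(·; m, s²) eventually dominates the shrinking Gaussian densities φ(·; μ_n, σ_n²) outside A. -/
open Filter
set_option maxHeartbeats 1000000

/-- The density of the univariate normal distribution `N(m, s²)`: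
`φ(θ; m, s²) = (2π s²)^{−1/2} exp(−(θ−m)²/(2 s²))`. -/
noncomputable def normalPDF (m s θ : ℝ) : ℝ :=
  (Real.sqrt (2 * Real.pi * s ^ 2))⁻¹ * Real.exp (-(θ - m) ^ 2 / (2 * s ^ 2))

lemma normalPDF_eq (m s θ : ℝ) (hs : 0 < s) :
    normalPDF m s θ = (Real.sqrt (2 * Real.pi))⁻¹ * s⁻¹ *
      Real.exp (-(θ - m) ^ 2 / (2 * s ^ 2)) := by
  unfold normalPDF
  rw [show 2 * Real.pi * s ^ 2 = (2 * Real.pi) * s ^ 2 by ring,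
    Real.sqrt_mul (by positivity), Real.sqrt_sq hs.le, mul_inv]

/-- **Eventual domination of collapsing Gaussians by a Gaussian prior.**
Let `a, m ∈ ℝ`, `s > 0`, `μ_n → a`, `σ_n > 0` with `σ_n → 0`.  Then there exist `R > 0`
and `N` such that for all `n ≥ N` and all `θ` with `|θ − a| ≥ R`,
`φ(θ; μ_n, σ_n²) ≤ φ(θ; m, s²)`.  In particular the compact set `A = [a − R, a + R]`
contains `a` in its interior and the Gaussian prior density dominates the shrinking
Gaussian densities outside `A` for `n ≥ N`. -/
theorem gaussian_prior_eventually_dominates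
    (a m : ℝ) (s : ℝ) (hs : 0 < s)
    (μ : ℕ → ℝ) (hμ : Tendsto μ atTop (nhds a))
    (σ : ℕ → ℝ) (hσpos : ∀ n, 0 < σ n) (hσ : Tendsto σ atTop (nhds 0)) :
    ∃ R > 0, ∃ N : ℕ,
      (∀ n ≥ N, ∀ θ : ℝ, R ≤ |θ - a| → normalPDF (μ n) (σ n) θ ≤ normalPDF m s θ) ∧
      a ∈ interior (Set.Icc (a - R) (a + R)) := by
  set c := |a - m| with hc
  have hc0 : 0 ≤ c := abs_nonneg _
  set R := 4 * c + 4 * s + 8 with hR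
  have hR0 : (0:ℝ) < R := by positivity
  obtain ⟨N₁, hN₁⟩ := Metric.tendsto_atTop.mp hμ 1 one_pos
  obtain ⟨N₂, hN₂⟩ := Metric.tendsto_atTop.mp hσ (s / 2) (by positivity)
  refine ⟨R, hR0, max N₁ N₂, ?_, ?_⟩
  · intro n hn θ hθ
    have hμn : |μ n - a| < 1 := by
      simpa [Real.dist_eq] using hN₁ n (le_trans (le_max_left _ _) hn)
    have hσn : σ n ≤ s / 2 := by
      have := hN₂ n (le_trans (le_max_right _ _) hn)
      rw [Real.dist_eq, sub_zero] at this
      linarith [(le_abs_self (σ n)).trans this.le]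
    have hσn0 : 0 < σ n := hσpos n
    rw [normalPDF_eq _ _ _ hσn0, normalPDF_eq _ _ _ hs]
    have key : Real.log (s / σ n) + (θ - m) ^ 2 / (2 * s ^ 2)
        ≤ (θ - μ n) ^ 2 / (2 * (σ n) ^ 2) := by
      have hd : R ≤ |θ - a| := hθ
      have hd1 : R - 1 ≤ |θ - μ n| := by
        have : |θ - a| ≤ |θ - μ n| + |μ n - a| := by
          simpa using abs_sub_le θ (μ n) a
        linarith
      have hd1sq : (R - 1) ^ 2 ≤ (θ - μ n) ^ 2 := by
        have := sq_le_sq' (by linarith [abs_nonneg (θ - μ n), neg_abs_le (θ - μ n)]) (le_abs_self (θ - μ n))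
        calc (R - 1) ^ 2 ≤ |θ - μ n| ^ 2 := by
              apply pow_le_pow_left₀ (by linarith) hd1
          _ = (θ - μ n) ^ 2 := sq_abs _
      have hlog : Real.log (s / σ n) ≤ s / σ n := by
        have h := Real.log_le_sub_one_of_pos (show (0:ℝ) < s / σ n by positivity)
        have : (0:ℝ) < s / σ n := by positivity
        linarith
      -- part (i): log term ≤ (θ-μ)²/(4σ²)
      have h1 : s / σ n ≤ (θ - μ n) ^ 2 / (4 * (σ n) ^ 2) := by
        rw [div_le_div_iff₀ hσn0 (by positivity)]
        have : 4 * s * σ n ≤ (R - 1) ^ 2 := by nlinarith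
        nlinarith
      -- part (ii): (θ-m)²/(2s²) ≤ (θ-μ)²/(4σ²)
      have hθm : |θ - m| ≤ |θ - a| + c := by
        have : |θ - m| ≤ |θ - a| + |a - m| := abs_sub_le θ a m
        linarith
      have hθm2 : (θ - m) ^ 2 ≤ (|θ - a| + c) ^ 2 := by
        calc (θ - m) ^ 2 = |θ - m| ^ 2 := (sq_abs _).symm
          _ ≤ (|θ - a| + c) ^ 2 := by
              apply pow_le_pow_left₀ (abs_nonneg _) hθm
      have hd2 : |θ - a| - 1 ≤ |θ - μ n| := by
        have : |θ - a| ≤ |θ - μ n| + |μ n - a| := by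
          simpa using abs_sub_le θ (μ n) a
        linarith
      have hdsq : (|θ - a| - 1) ^ 2 ≤ (θ - μ n) ^ 2 := by
        calc (|θ - a| - 1) ^ 2 ≤ |θ - μ n| ^ 2 :=
              pow_le_pow_left₀ (by linarith) hd2 2
          _ = (θ - μ n) ^ 2 := sq_abs _
      have h2 : (θ - m) ^ 2 / (2 * s ^ 2) ≤ (θ - μ n) ^ 2 / (4 * (σ n) ^ 2) := by
        rw [div_le_div_iff₀ (by positivity) (by positivity)]
        have hkey : (|θ - a| + c) ^ 2 ≤ 2 * (|θ - a| - 1) ^ 2 := by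
          set d := |θ - a|
          nlinarith [hd, hR0]
        have hσs : 4 * (σ n) ^ 2 ≤ s ^ 2 := by nlinarith
        nlinarith [sq_nonneg (θ - m), sq_nonneg (θ - μ n), hθm2, hdsq]
      have : Real.log (s / σ n) + (θ - m) ^ 2 / (2 * s ^ 2)
          ≤ (θ - μ n) ^ 2 / (4 * (σ n) ^ 2) + (θ - μ n) ^ 2 / (4 * (σ n) ^ 2) := by
        exact add_le_add (hlog.trans h1) h2
      calc Real.log (s / σ n) + (θ - m) ^ 2 / (2 * s ^ 2)
          ≤ (θ - μ n) ^ 2 / (4 * (σ n) ^ 2) + (θ - μ n) ^ 2 / (4 * (σ n) ^ 2) := this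
        _ = (θ - μ n) ^ 2 / (2 * (σ n) ^ 2) := by ring
    -- now conclude
    have hexp : (s / σ n) * Real.exp (-(θ - μ n) ^ 2 / (2 * (σ n) ^ 2))
        ≤ Real.exp (-(θ - m) ^ 2 / (2 * s ^ 2)) := by
      rw [← Real.exp_log (show (0:ℝ) < s / σ n by positivity), ← Real.exp_add]
      apply Real.exp_le_exp.mpr
      have e1 : -(θ - μ n) ^ 2 / (2 * (σ n) ^ 2) = -((θ - μ n) ^ 2 / (2 * (σ n) ^ 2)) := by ring
      have e2 : -(θ - m) ^ 2 / (2 * s ^ 2) = -((θ - m) ^ 2 / (2 * s ^ 2)) := by ring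
      rw [e1, e2]
      linarith [key]
    have hsqrt : (0:ℝ) < (Real.sqrt (2 * Real.pi))⁻¹ := by
      have : (0:ℝ) < Real.sqrt (2 * Real.pi) := Real.sqrt_pos.mpr (by positivity)
      positivity
    calc (Real.sqrt (2 * Real.pi))⁻¹ * (σ n)⁻¹ * Real.exp (-(θ - μ n) ^ 2 / (2 * (σ n) ^ 2))
        = (Real.sqrt (2 * Real.pi))⁻¹ * s⁻¹ *
            ((s / σ n) * Real.exp (-(θ - μ n) ^ 2 / (2 * (σ n) ^ 2))) := by
          have hstep : (σ n)⁻¹ = s⁻¹ * (s / σ n) := by field_simp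
          rw [hstep]; ring
      _ ≤ (Real.sqrt (2 * Real.pi))⁻¹ * s⁻¹ * Real.exp (-(θ - m) ^ 2 / (2 * s ^ 2)) := by
          have hA : (0:ℝ) ≤ (Real.sqrt (2 * Real.pi))⁻¹ * s⁻¹ := by positivity
          exact mul_le_mul_of_nonneg_left hexp hA
  · rw [interior_Icc]
    exact ⟨by linarith, by linarith⟩
end

section
/- Let D ≥ 1 and for each d ∈ {1, …, D} let μ_{q,d}, μ_{π,d} ∈ ℝ and σ_{q,d}, σ_{π,d} > 0. Define the product normal densities q(θ) = Π_{d=1}^D φ(θ_d; μ_{q,d}, σ_{q,d}²) and π(θ) = Π_{d=1}^D φ(θ_d; μ_{π,d}, σ_{π,d}²) on ℝ^D. Then the Fisher divergence FD(q‖π) := ∫_{ℝ^D} ‖∇_θ log q(θ) − ∇_θ log π(θ)‖₂² q(θ) dθ equals Σ_{d=1}^D [ C_{1,d}² + 2 C_{1,d} C_{2,d} μ_{q,d} + C_{2,d}² (σ_{q,d}² + μ_{q,d}²) ], where C_{1,d} = μ_{q,d}/σ_{q,d}² − μ_{π,d}/σ_{π,d}² and C_{2,d} = 1/σ_{π,d}²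 − 1/σ_{q,d}². -/
open MeasureTheory

/-! The score of a mean-field normal density is affine in each coordinate,
`∂_d log q(θ) = -(θ_d - μ_{q,d}) / σ_{q,d}²`, so the difference of the two scores has `d`-th
coordinate `C_{1,d} + C_{2,d} θ_d`. Its squared norm is a sum over coordinates, and by Fubini the
`d`-th term only sees the marginal `N(μ_{q,d}, σ_{q,d}²)`, against which
`E (a + b X)² = (a + b μ)² + b² σ²`. -/

open Real ProbabilityTheory Finset
open scoped NNReal

section Gaussian

variable (μ : ℝ) (v : ℝ≥0)

lemma integral_sq_gaussianReal : ∫ x, x ^ 2 ∂gaussianReal μ v = v + μ ^ 2 := by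
  have h := variance_eq_sub (memLp_id_gaussianReal (μ := μ) (v := v) 2)
  simp only [Pi.pow_apply, id] at h
  rw [variance_id_gaussianReal, integral_id_gaussianReal] at h
  linarith

lemma integrable_affine_sq_gaussianReal (a b : ℝ) :
    Integrable (fun x ↦ (a + b * x) ^ 2) (gaussianReal μ v) :=
  ((memLp_const a).add ((memLp_id_gaussianReal 2).const_mul b)).integrable_sq

lemma integral_affine_sq_gaussianReal (a b : ℝ) :
    ∫ x, (a + b * x) ^ 2 ∂gaussianReal μ v = (a + b * μ) ^ 2 + b ^ 2 * v := by
  have hx : Integrable (fun x ↦ x) (gaussianReal μ v) := (memLp_id_gaussianReal 1).integrable le_rfl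
  have hx2 : Integrable (fun x ↦ x ^ 2) (gaussianReal μ v) := (memLp_id_gaussianReal 2).integrable_sq
  calc ∫ x, (a + b * x) ^ 2 ∂gaussianReal μ v
      = ∫ x, (a ^ 2 + 2 * a * b * x + b ^ 2 * x ^ 2) ∂gaussianReal μ v := by
        congr with x; ring
    _ = a ^ 2 + 2 * a * b * μ + b ^ 2 * (v + μ ^ 2) := by
        have hlin : Integrable (fun x ↦ a ^ 2 + 2 * a * b * x) (gaussianReal μ v) :=
          (integrable_const _).add (hx.const_mul _)
        rw [integral_add hlin (hx2.const_mul _),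
          integral_add (integrable_const _) (hx.const_mul _), integral_const_mul,
          integral_const_mul, integral_id_gaussianReal, integral_sq_gaussianReal]
        simp
    _ = (a + b * μ) ^ 2 + b ^ 2 * v := by ring

variable {μ v}

lemma integral_mul_gaussianPDFReal (hv : v ≠ 0) (f : ℝ → ℝ) :
    ∫ x, f x * gaussianPDFReal μ v x = ∫ x, f x ∂gaussianReal μ v := by
  simp_rw [integral_gaussianReal_eq_integral_smul hv, smul_eq_mul, mul_comm]

lemma MeasureTheory.Integrable.mul_gaussianPDFReal (hv : v ≠ 0) {f : ℝ → ℝ}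
    (hf : Integrable f (gaussianReal μ v)) :
    Integrable (fun x ↦ f x * gaussianPDFReal μ v x) := by
  rw [gaussianReal_of_var_ne_zero _ hv,
    integrable_withDensity_iff_integrable_smul' (by fun_prop)
      (ae_of_all _ fun _ ↦ gaussianPDF_lt_top)] at hf
  simpa [toReal_gaussianPDF, mul_comm] using hf

end Gaussian

section NormalPDF

variable (m : ℝ) {s : ℝ}

lemma normalPDF_eq_gaussianPDFReal (s : ℝ) : normalPDF m s = gaussianPDFReal m (nnabs s ^ 2) := by
  ext t
  simp [normalPDF, gaussianPDFReal]

lemma nnabs_sq_ne_zero (hs : s ≠ 0) : nnabs s ^ 2 ≠ 0 := by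
  simpa using hs

lemma integrable_normalPDF (s : ℝ) : Integrable (normalPDF m s) := by
  rw [normalPDF_eq_gaussianPDFReal]
  exact integrable_gaussianPDFReal _ _

lemma integral_normalPDF (hs : s ≠ 0) : ∫ t, normalPDF m s t = 1 := by
  rw [normalPDF_eq_gaussianPDFReal]
  exact integral_gaussianPDFReal_eq_one _ (nnabs_sq_ne_zero hs)

lemma integrable_affine_sq_mul_normalPDF (hs : s ≠ 0) (a b : ℝ) :
    Integrable (fun t ↦ (a + b * t) ^ 2 * normalPDF m s t) := by
  rw [normalPDF_eq_gaussianPDFReal]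
  exact (integrable_affine_sq_gaussianReal _ _ a b).mul_gaussianPDFReal (nnabs_sq_ne_zero hs)

lemma integral_affine_sq_mul_normalPDF (hs : s ≠ 0) (a b : ℝ) :
    ∫ t, (a + b * t) ^ 2 * normalPDF m s t = (a + b * m) ^ 2 + b ^ 2 * s ^ 2 := by
  rw [normalPDF_eq_gaussianPDFReal, integral_mul_gaussianPDFReal (nnabs_sq_ne_zero hs),
    integral_affine_sq_gaussianReal]
  simp

lemma log_normalPDF (hs : s ≠ 0) (t : ℝ) :
    log (normalPDF m s t) = -log √(2 * π * s ^ 2) - (t - m) ^ 2 / (2 * s ^ 2) := by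
  have hsqrt : √(2 * π * s ^ 2) ≠ 0 := by positivity
  rw [normalPDF, log_mul (inv_ne_zero hsqrt) (exp_ne_zero _), log_inv, log_exp]
  ring

lemma hasDerivAt_log_normalPDF (hs : s ≠ 0) (t : ℝ) :
    HasDerivAt (fun t ↦ log (normalPDF m s t)) (-(t - m) / s ^ 2) t := by
  simp_rw [log_normalPDF m hs]
  have h := ((((hasDerivAt_id t).sub_const m).pow 2).div_const (2 * s ^ 2)).const_sub
    (-log √(2 * π * s ^ 2))
  refine h.congr_deriv ?_
  simp only [id]
  field_simp
  ring

end NormalPDF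

section ProductDensity

variable {ι : Type*} [Fintype ι] {E : Type*}

lemma mul_prod_eq_prod_update [DecidableEq ι] (f : ι → E → ℝ) (g : E → ℝ) (i : ι) (x : ι → E) :
    g (x i) * ∏ j, f j (x j) = ∏ j, Function.update f i (fun t ↦ g t * f i t) j (x j) := by
  rw [← mul_prod_erase univ _ (mem_univ i), ← mul_prod_erase univ _ (mem_univ i),
    Function.update_self, mul_assoc]
  congr 2
  refine prod_congr rfl fun j hj ↦ ?_
  rw [Function.update_of_ne (ne_of_mem_erase hj)]

variable [MeasureSpace E] [SigmaFinite (volume : Measure E)]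

lemma integral_comp_eval_mul_prod [DecidableEq ι] (f : ι → E → ℝ) (g : E → ℝ) (i : ι) :
    ∫ x : ι → E, g (x i) * ∏ j, f j (x j) =
      (∫ t, g t * f i t) * ∏ j ∈ univ.erase i, ∫ t, f j t := by
  simp_rw [mul_prod_eq_prod_update f g i, integral_fintype_prod_volume_eq_prod]
  rw [← mul_prod_erase univ _ (mem_univ i), Function.update_self]
  congr 1
  refine prod_congr rfl fun j hj ↦ ?_
  rw [Function.update_of_ne (ne_of_mem_erase hj)]

lemma integrable_comp_eval_mul_prod {f : ι → E → ℝ} {g : E → ℝ} {i : ι}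
    (hf : ∀ j, Integrable (f j)) (hg : Integrable (fun t ↦ g t * f i t)) :
    Integrable (fun x : ι → E ↦ g (x i) * ∏ j, f j (x j)) := by
  classical
  simp_rw [mul_prod_eq_prod_update f g i]
  refine Integrable.fintype_prod fun j ↦ ?_
  rcases eq_or_ne j i with rfl | hj
  · rwa [Function.update_self]
  · rw [Function.update_of_ne hj]
    exact hf j

end ProductDensity

section MeanFieldNormal

variable {ι : Type*} [Fintype ι] (μ : ι → ℝ) {σ : ι → ℝ}

lemma integrable_affine_sq_mul_prod_normalPDF (hσ : ∀ i, σ i ≠ 0) (a b : ℝ) (i : ι) :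
    Integrable (fun x : ι → ℝ ↦ (a + b * x i) ^ 2 * ∏ j, normalPDF (μ j) (σ j) (x j)) :=
  integrable_comp_eval_mul_prod (fun j ↦ integrable_normalPDF (μ j) (σ j))
    (integrable_affine_sq_mul_normalPDF (μ i) (hσ i) a b)

lemma integral_affine_sq_mul_prod_normalPDF (hσ : ∀ i, σ i ≠ 0) (a b : ℝ) (i : ι) :
    ∫ x : ι → ℝ, (a + b * x i) ^ 2 * ∏ j, normalPDF (μ j) (σ j) (x j) =
      (a + b * μ i) ^ 2 + b ^ 2 * σ i ^ 2 := by
  classical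
  rw [integral_comp_eval_mul_prod (fun j ↦ normalPDF (μ j) (σ j)) (fun t ↦ (a + b * t) ^ 2),
    integral_affine_sq_mul_normalPDF (μ i) (hσ i),
    prod_eq_one fun j _ ↦ integral_normalPDF (μ j) (hσ j), mul_one]

end MeanFieldNormal

section Gradient

variable {ι : Type*} [Fintype ι]

lemma hasGradientAt_sum_comp_apply {f : ι → ℝ → ℝ} {f' : ι → ℝ} {x : EuclideanSpace ℝ ι}
    (hf : ∀ i, HasDerivAt (f i) (f' i) (x i)) :
    HasGradientAt (fun y : EuclideanSpace ℝ ι ↦ ∑ i, f i (y i)) (WithLp.toLp 2 f') x := by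
  have hdual : InnerProductSpace.toDual ℝ (EuclideanSpace ℝ ι) (WithLp.toLp 2 f') =
      ∑ i, f' i • PiLp.proj 2 (fun _ : ι ↦ ℝ) i := by
    ext y
    simp [PiLp.inner_apply, mul_comm]
  rw [hasGradientAt_iff_hasFDerivAt, hdual]
  exact HasFDerivAt.fun_sum fun i _ ↦
    (hf i).comp_hasFDerivAt x (PiLp.hasFDerivAt_apply 2 x i)

lemma gradient_log_prod_normalPDF (μ σ : ι → ℝ) (hσ : ∀ i, σ i ≠ 0) (θ : EuclideanSpace ℝ ι) :
    gradient (fun t : EuclideanSpace ℝ ι ↦ log (∏ i, normalPDF (μ i) (σ i) (t i))) θ =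
      WithLp.toLp 2 (fun i ↦ -(θ i - μ i) / σ i ^ 2) := by
  have hpos : ∀ i t, normalPDF (μ i) (σ i) t ≠ 0 := fun i t ↦ by
    rw [normalPDF_eq_gaussianPDFReal]
    exact (gaussianPDFReal_pos _ _ _ (nnabs_sq_ne_zero (hσ i))).ne'
  simp_rw [log_prod fun i _ ↦ hpos i _]
  exact (hasGradientAt_sum_comp_apply fun i ↦
    hasDerivAt_log_normalPDF (μ i) (hσ i) (θ i)).gradient

end Gradient

theorem fisher_divergence_mean_field_normal_closed_form_general
    (D : ℕ)
    (μq μπ σq σπ : Fin D → ℝ) (hσq : ∀ d, 0 < σq d) (hσπ : ∀ d, 0 < σπ d) :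
    (∫ θ : EuclideanSpace ℝ (Fin D),
        ‖gradient (fun t : EuclideanSpace ℝ (Fin D) =>
            Real.log (∏ d, normalPDF (μq d) (σq d) (t d))) θ -
          gradient (fun t : EuclideanSpace ℝ (Fin D) =>
            Real.log (∏ d, normalPDF (μπ d) (σπ d) (t d))) θ‖ ^ 2 *
        (∏ d, normalPDF (μq d) (σq d) (θ d))) =
    ∑ d, ((μq d / σq d ^ 2 - μπ d / σπ d ^ 2) ^ 2 +
      2 * (μq d / σq d ^ 2 - μπ d / σπ d ^ 2) * (1 / σπ d ^ 2 - 1 / σq d ^ 2) * μq d +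
      (1 / σπ d ^ 2 - 1 / σq d ^ 2) ^ 2 * (σq d ^ 2 + μq d ^ 2)) := by
  have hq d : σq d ≠ 0 := (hσq d).ne'
  have hπ d : σπ d ≠ 0 := (hσπ d).ne'
  set C₁ : Fin D → ℝ := fun d ↦ μq d / σq d ^ 2 - μπ d / σπ d ^ 2
  set C₂ : Fin D → ℝ := fun d ↦ 1 / σπ d ^ 2 - 1 / σq d ^ 2
  have hscore d (t : ℝ) : -(t - μq d) / σq d ^ 2 - -(t - μπ d) / σπ d ^ 2 = C₁ d + C₂ d * t := by
    simp only [C₁, C₂]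
    field_simp [hq d, hπ d]
    ring
  simp_rw [gradient_log_prod_normalPDF _ _ hq, gradient_log_prod_normalPDF _ _ hπ,
    ← WithLp.toLp_sub, EuclideanSpace.real_norm_sq_eq, Pi.sub_apply, hscore, sum_mul]
  rw [(PiLp.volume_preserving_ofLp (Fin D)).integral_comp
    (MeasurableEquiv.toLp 2 _).symm.measurableEmbedding
    (fun x : Fin D → ℝ ↦ ∑ d, (C₁ d + C₂ d * x d) ^ 2 * ∏ j, normalPDF (μq j) (σq j) (x j)),
    integral_finsetSum _ fun d _ ↦ integrable_affine_sq_mul_prod_normalPDF μq hq _ _ d]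
  refine sum_congr rfl fun d _ ↦ ?_
  rw [integral_affine_sq_mul_prod_normalPDF μq hq]
  ring

/-- **Closed form of the Fisher divergence between mean-field normal densities.**
For `D ≥ 1` and mean-field normal densities
`q(θ) = ∏_d φ(θ_d; μ_{q,d}, σ_{q,d}²)` and `π(θ) = ∏_d φ(θ_d; μ_{π,d}, σ_{π,d}²)` on
`ℝ^D`, the Fisher divergence `FD(q‖π) = ∫ ‖∇ log q − ∇ log π‖₂² q dθ` equals
`∑_d [C_{1,d}² + 2 C_{1,d} C_{2,d} μ_{q,d} + C_{2,d}² (σ_{q,d}² + μ_{q,d}²)]` with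
`C_{1,d} = μ_{q,d}/σ_{q,d}² − μ_{π,d}/σ_{π,d}²` and `C_{2,d} = 1/σ_{π,d}² − 1/σ_{q,d}²`. -/
theorem fisher_divergence_mean_field_normal_closed_form
    (D : ℕ) (hD : 1 ≤ D)
    (μq μπ σq σπ : Fin D → ℝ) (hσq : ∀ d, 0 < σq d) (hσπ : ∀ d, 0 < σπ d) :
    (∫ θ : EuclideanSpace ℝ (Fin D),
        ‖gradient (fun t : EuclideanSpace ℝ (Fin D) =>
            Real.log (∏ d, normalPDF (μq d) (σq d) (t d))) θ -
          gradient (fun t : EuclideanSpace ℝ (Fin D) =>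
            Real.log (∏ d, normalPDF (μπ d) (σπ d) (t d))) θ‖ ^ 2 *
        (∏ d, normalPDF (μq d) (σq d) (θ d))) =
    ∑ d, ((μq d / σq d ^ 2 - μπ d / σπ d ^ 2) ^ 2 +
      2 * (μq d / σq d ^ 2 - μπ d / σπ d ^ 2) * (1 / σπ d ^ 2 - 1 / σq d ^ 2) * μq d +
      (1 / σπ d ^ 2 - 1 / σq d ^ 2) ^ 2 * (σq d ^ 2 + μq d ^ 2)) :=
  fisher_divergence_mean_field_normal_closed_form_general D μq μπ σq σπ hσq hσπ
end

section
/- Let m ≥ 1, let (ν_n) be Borel probability measures on ℝ^m converging weakly to the Dirac measure δ_a for some a ∈ ℝ^m, let M > 0, and let g_n : ℝ^m → ℝ be Borel measurable with |g_n(θ)| ≤ M for all θ and n. Let g : ℝ^m → ℝ be bounded, Borel measurable, and continuous at a, and assume g_n → g uniformly on every compact subset of ℝ^m. Then ∫ g_n dν_n → g(a) as n → ∞. -/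
/-!
Split the integral over an open neighbourhood `U` of `a` and its complement. By locally uniform
convergence and continuity of `g` at `a`, for large `n` the integrand is within `ε` of `g a` on
`U`; the portmanteau theorem makes `ν n Uᶜ → 0`, and the bound `M` controls the integrand there.
-/

open MeasureTheory Filter
open scoped Topology

theorem TendstoLocallyUniformly.tendsto_prod_nhds {ι X β : Type*} [TopologicalSpace X]
    [UniformSpace β] {F : ι → X → β} {f : X → β} {l : Filter ι} {a : X}
    (h : TendstoLocallyUniformly F f l) (hf : ContinuousAt f a) :
    Tendsto (fun q : ι × X => F q.1 q.2) (l ×ˢ 𝓝 a) (𝓝 (f a)) :=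
  tendsto_comp_of_locally_uniform_limit hf tendsto_snd fun u hu =>
    let ⟨t, ht, hFt⟩ := h u hu a
    ⟨t, ht, tendsto_fst.eventually hFt⟩

namespace MeasureTheory

theorem abs_integral_sub_le_of_abs_sub_le_on {X : Type*} [MeasurableSpace X] {μ : Measure X}
    [IsProbabilityMeasure μ] {f : X → ℝ} {M c ε : ℝ} {U : Set X}
    (hf : AEStronglyMeasurable f μ) (hfM : ∀ x, |f x| ≤ M) (hU : MeasurableSet U)
    (hε : 0 ≤ ε) (hfU : ∀ x ∈ U, |f x - c| ≤ ε) :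
    |∫ x, f x ∂μ - c| ≤ ε + μ.real Uᶜ * (M + |c|) := by
  have hfi : Integrable f μ :=
    (integrable_const M).mono' hf (.of_forall fun x => by simpa using hfM x)
  have hbound : ∀ x, |f x - c| ≤ ε + Uᶜ.indicator (fun _ => M + |c|) x := by
    intro x
    by_cases hx : x ∈ U
    · simpa [hx] using hfU x hx
    · have hfar : |f x - c| ≤ M + |c| := (abs_sub _ _).trans (by linarith [hfM x])
      simp only [Set.indicator_of_mem (Set.mem_compl hx)]
      linarith
  calc |∫ x, f x ∂μ - c| = |∫ x, (f x - c) ∂μ| := by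
        rw [integral_sub hfi (integrable_const c), integral_const, probReal_univ, one_smul]
    _ ≤ ∫ x, |f x - c| ∂μ := abs_integral_le_integral_abs
    _ ≤ ∫ x, (ε + Uᶜ.indicator (fun _ => M + |c|) x) ∂μ :=
        integral_mono (hfi.sub (integrable_const c)).abs
          ((integrable_const ε).add ((integrable_const _).indicator hU.compl)) hbound
    _ = ε + μ.real Uᶜ * (M + |c|) := by
        rw [integral_add (integrable_const ε) ((integrable_const _).indicator hU.compl),
          integral_const, integral_indicator_const _ hU.compl, probReal_univ, one_smul,
          smul_eq_mul]

namespace ProbabilityMeasure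

variable {X ι : Type*} [MeasurableSpace X] [TopologicalSpace X] [OpensMeasurableSpace X]
  [HasOuterApproxClosed X] {l : Filter ι} {μ : ι → ProbabilityMeasure X} {a : X}

theorem tendsto_measureReal_of_tendsto_dirac
    (hμ : Tendsto μ l (𝓝 ⟨Measure.dirac a, inferInstance⟩)) {F : Set X} (hF : IsClosed F)
    (ha : a ∉ F) : Tendsto (fun i => (μ i : Measure X).real F) l (𝓝 0) := by
  have hlimsup : l.limsup (fun i => (μ i : Measure X) F) ≤ 0 := by
    simpa [Measure.dirac_apply' a hF.measurableSet, ha] using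
      limsup_measure_closed_le_of_tendsto hμ hF
  have hmeas : Tendsto (fun i => (μ i : Measure X) F) l (𝓝 0) :=
    tendsto_of_le_liminf_of_limsup_le bot_le hlimsup
  exact (ENNReal.tendsto_toReal ENNReal.zero_ne_top).comp hmeas

theorem tendsto_integral_of_tendsto_dirac
    (hμ : Tendsto μ l (𝓝 ⟨Measure.dirac a, inferInstance⟩)) {F : ι → X → ℝ} {M c : ℝ}
    (hFmeas : ∀ i, Measurable (F i)) (hFM : ∀ i x, |F i x| ≤ M)
    (hF : Tendsto (fun q : ι × X => F q.1 q.2) (l ×ˢ 𝓝 a) (𝓝 c)) :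
    Tendsto (fun i => ∫ x, F i x ∂(μ i : Measure X)) l (𝓝 c) := by
  refine Metric.tendsto_nhds.2 fun ε hε => ?_
  obtain ⟨p, hp, q, hq, hpq⟩ := eventually_prod_iff.1
    (hF.eventually (Metric.closedBall_mem_nhds c (half_pos hε)))
  obtain ⟨U, hUq, hUopen, haU⟩ := eventually_nhds_iff.1 hq
  have htail : Tendsto (fun i => (μ i : Measure X).real Uᶜ * (M + |c|)) l (𝓝 0) := by
    simpa using (tendsto_measureReal_of_tendsto_dirac hμ hUopen.isClosed_compl
      (fun h => h haU)).mul_const (M + |c|)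
  filter_upwards [hp, htail.eventually (gt_mem_nhds (half_pos hε))] with i hpi hi
  have := abs_integral_sub_le_of_abs_sub_le_on (μ := (μ i : Measure X))
    (hFmeas i).aestronglyMeasurable (hFM i) hUopen.measurableSet (half_pos hε).le
    fun x hx => hpq hpi (hUq x hx)
  rw [Real.dist_eq]
  linarith

end ProbabilityMeasure

end MeasureTheory

theorem gvi_bounded_losses_integral_tendsto_general
    (m : ℕ)
    (ν : ℕ → ProbabilityMeasure (Fin m → ℝ))
    (a : Fin m → ℝ)
    (hν : Tendsto ν atTop
      (nhds (⟨Measure.dirac a, inferInstance⟩ : ProbabilityMeasure (Fin m → ℝ))))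
    (M : ℝ)
    (g' : ℕ → (Fin m → ℝ) → ℝ) (hg'meas : ∀ n, Measurable (g' n))
    (hg'bdd : ∀ n θ, |g' n θ| ≤ M)
    (g : (Fin m → ℝ) → ℝ) (hgcont : ContinuousAt g a)
    (hunif : ∀ K : Set (Fin m → ℝ), IsCompact K → TendstoUniformlyOn g' g atTop K) :
    Tendsto (fun n => ∫ θ, g' n θ ∂(ν n : Measure (Fin m → ℝ))) atTop (nhds (g a)) :=
  ProbabilityMeasure.tendsto_integral_of_tendsto_dirac hν hg'meas hg'bdd
    ((tendstoLocallyUniformly_iff_forall_isCompact.2 hunif).tendsto_prod_nhds hgcont)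

/-- **Vanishing coupling error for bounded losses.**
Let `m ≥ 1`, let `(ν_n)` be Borel probability measures on `ℝ^m` converging weakly to
`δ_a`, `M > 0`, and `g_n : ℝ^m → ℝ` Borel measurable with `|g_n θ| ≤ M` for all `θ, n`.
Let `g : ℝ^m → ℝ` be bounded, Borel measurable, continuous at `a`, with `g_n → g`
uniformly on every compact subset of `ℝ^m`.  Then `∫ g_n dν_n → g a`. -/
theorem gvi_bounded_losses_integral_tendsto
    (m : ℕ) (hm : 1 ≤ m)
    (ν : ℕ → ProbabilityMeasure (Fin m → ℝ))
    (a : Fin m → ℝ)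
    (hν : Tendsto ν atTop
      (nhds (⟨Measure.dirac a, inferInstance⟩ : ProbabilityMeasure (Fin m → ℝ))))
    (M : ℝ) (hM : 0 < M)
    (g' : ℕ → (Fin m → ℝ) → ℝ) (hg'meas : ∀ n, Measurable (g' n))
    (hg'bdd : ∀ n θ, |g' n θ| ≤ M)
    (g : (Fin m → ℝ) → ℝ) (hgbdd : ∃ C : ℝ, ∀ θ, |g θ| ≤ C)
    (hgmeas : Measurable g) (hgcont : ContinuousAt g a)
    (hunif : ∀ K : Set (Fin m → ℝ), IsCompact K → TendstoUniformlyOn g' g atTop K) :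
    Tendsto (fun n => ∫ θ, g' n θ ∂(ν n : Measure (Fin m → ℝ))) atTop (nhds (g a)) :=
  gvi_bounded_losses_integral_tendsto_general m ν a hν M g' hg'meas hg'bdd g hgcont hunif
end
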